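/- Let 0 < r_w < r_e, h > 0, Q > 0, α > 0, β > 0, λ > 0, 0 ≤ s < 1, A = Q/(2πh(r_e² − r_w²)), v(r) = A·(r_e² − r²)/r. Suppose 0 < v_D ≤ v_F ≤ v(r_w) and r_F, r_D ∈ [r_w, r_e] satisfy v(r_F) = v_F and v(r_D) = v_D. Define g(ξ) = α + βξ for ξ ≥ v_F, g(ξ) = α for v_D ≤ ξ < v_F, g(ξ) = λ·ξ^{−s} for 0 < ξ < v_D, J_FDpD = Q²/(2πh·∫_{r_w}^{r_e} r·g(v(r))·v(r)² dr), J_D = Q²/(2πh·∫_{r_w}^{r_e} r·α·v(r)² dr), S_D[r_1, r_2] = α·∫_{r_1}^{r_2} (r_e² − r²)²·r^{−1} dr, S_F[r_w, r_F] = ∫_{r_w}^{r_F} (α + β·A·(r_e² − r²)·r^{−1})·(r_e² − r²)²·r^{−1} dr, and S_pD[r_D, r_e] = λ·A^{−s}·∫_{r_D}^{r_e} (r_e² − r²)^{2−s}·r^{s−1} dr. Then J_FDpD = J_D · S_D[r_w, r_e] / (S_F[r_w, r_F] + S_D[r_F, r_D] + S_pD[r_D, r_e]). -/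

import Mathlib

/-!
Since `v` is strictly decreasing, the thresholds `v_F ≥ v_D` cut `[r_w, r_e]` at `r_F ≤ r_D`
into three intervals on each of which `g ∘ v` is a single law. On them the integrand
`r · g(v r) · v(r)²` is `A²` times the integrand of `S_F`, `S_D` and `S_pD` respectively, and the
Darcy integrand is `A²` times that of `S_D` throughout; the factor `A²` cancels in `J_FDpD / J_D`.
-/

open MeasureTheory Set

section IntervalIntegralOnPieces

variable {E : Type*} [NormedAddCommGroup E] {μ : Measure ℝ} [NullSingletonClass μ]
  {f g : ℝ → E} {a b : ℝ}

theorem IntervalIntegrable.congr_Ioo (hg : IntervalIntegrable g μ a b) (hab : a ≤ b)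
    (h : EqOn f g (Ioo a b)) : IntervalIntegrable f μ a b := by
  rw [intervalIntegrable_iff_integrableOn_Ioo_of_le hab] at hg ⊢
  exact hg.congr_fun h.symm measurableSet_Ioo

variable [NormedSpace ℝ E]

theorem intervalIntegral_congr_Ioo (hab : a ≤ b) (h : EqOn f g (Ioo a b)) :
    ∫ x in a..b, f x ∂μ = ∫ x in a..b, g x ∂μ := by
  rw [intervalIntegral.integral_of_le hab, intervalIntegral.integral_of_le hab,
    integral_Ioc_eq_integral_Ioo, integral_Ioc_eq_integral_Ioo]
  exact setIntegral_congr_fun measurableSet_Ioo h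

theorem intervalIntegral_eq_add_add_of_eqOn_Ioo {f₁ f₂ f₃ : ℝ → E} {c d : ℝ}
    (hab : a ≤ b) (hbc : b ≤ c) (hcd : c ≤ d)
    (h₁ : EqOn f f₁ (Ioo a b)) (h₂ : EqOn f f₂ (Ioo b c)) (h₃ : EqOn f f₃ (Ioo c d))
    (hi₁ : IntervalIntegrable f₁ μ a b) (hi₂ : IntervalIntegrable f₂ μ b c)
    (hi₃ : IntervalIntegrable f₃ μ c d) :
    ∫ x in a..d, f x ∂μ =
      (∫ x in a..b, f₁ x ∂μ) + (∫ x in b..c, f₂ x ∂μ) + ∫ x in c..d, f₃ x ∂μ := by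
  have hf₁ := hi₁.congr_Ioo hab h₁
  have hf₂ := hi₂.congr_Ioo hbc h₂
  have hf₃ := hi₃.congr_Ioo hcd h₃
  rw [← intervalIntegral.integral_add_adjacent_intervals (hf₁.trans hf₂) hf₃,
    ← intervalIntegral.integral_add_adjacent_intervals hf₁ hf₂,
    intervalIntegral_congr_Ioo hab h₁, intervalIntegral_congr_Ioo hbc h₂,
    intervalIntegral_congr_Ioo hcd h₃]

end IntervalIntegralOnPieces

noncomputable def radialVelocity (A r_e r : ℝ) : ℝ := A * (r_e ^ 2 - r ^ 2) / r

section RadialVelocity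

variable {A r_e r : ℝ}

theorem radialVelocity_strictAntiOn (hA : 0 < A) :
    StrictAntiOn (radialVelocity A r_e) (Ioi 0) := by
  intro a (ha : 0 < a) b (hb : 0 < b) hab
  rw [radialVelocity, radialVelocity, div_lt_div_iff₀ hb ha]
  nlinarith [mul_pos hA (mul_pos (sub_pos.mpr hab) (by positivity : 0 < r_e ^ 2 + a * b))]

theorem pos_of_radialVelocity_pos (hr : 0 < r) (hre : r ≤ r_e)
    (hv : 0 < radialVelocity A r_e r) : 0 < A :=
  pos_of_mul_pos_left ((div_pos_iff_of_pos_right hr).mp hv) (by nlinarith)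

theorem mul_forchheimer_mul_radialVelocity_sq (α β : ℝ) (hr : r ≠ 0) :
    r * (α + β * radialVelocity A r_e r) * radialVelocity A r_e r ^ 2 =
      A ^ 2 * ((α + β * A * (r_e ^ 2 - r ^ 2) * r⁻¹) * (r_e ^ 2 - r ^ 2) ^ 2 * r⁻¹) := by
  unfold radialVelocity; field_simp

theorem mul_darcy_mul_radialVelocity_sq (α : ℝ) (hr : r ≠ 0) :
    r * α * radialVelocity A r_e r ^ 2 = A ^ 2 * α * ((r_e ^ 2 - r ^ 2) ^ 2 * r⁻¹) := by
  unfold radialVelocity; field_simp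

theorem mul_preDarcy_mul_radialVelocity_sq (lam s : ℝ) (hA : 0 < A) (hr : 0 < r)
    (hre : r < r_e) :
    r * (lam * radialVelocity A r_e r ^ (-s)) * radialVelocity A r_e r ^ 2 =
      A ^ 2 * (lam * A ^ (-s)) * ((r_e ^ 2 - r ^ 2) ^ (2 - s) * r ^ (s - 1)) := by
  have hu : 0 < r_e ^ 2 - r ^ 2 := by nlinarith
  have hrs : 0 < r ^ s := Real.rpow_pos_of_pos hr s
  rw [radialVelocity, Real.div_rpow (by positivity) hr.le, Real.mul_rpow hA.le hu.le,
    Real.rpow_neg hr.le, sub_eq_add_neg (2 : ℝ), Real.rpow_add hu, Real.rpow_two,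
    sub_eq_add_neg s, Real.rpow_add hr, Real.rpow_neg_one]
  field_simp

end RadialVelocity

theorem ContinuousOn.intervalIntegrable_of_Ioi {E : Type*} [NormedAddCommGroup E]
    {μ : Measure ℝ} [IsLocallyFiniteMeasure μ] {f : ℝ → E} {a b : ℝ}
    (hf : ContinuousOn f (Ioi 0)) (ha : 0 < a) (hb : 0 < b) : IntervalIntegrable f μ a b :=
  (hf.mono fun _ hx ↦ (lt_min ha hb).trans_le hx.1).intervalIntegrable

theorem div_mul_div_eq_div_of_ne_zero {K : Type*} [Field K] (x c k u T : K) (hu : u ≠ 0) :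
    x / (c * (k * u)) * u / T = x / (c * (k * T)) := by
  rw [div_mul_eq_mul_div, div_div, mul_comm x, show c * (k * u) * T = u * (c * (k * T)) by ring,
    mul_div_mul_left _ _ hu]

section Integrands

variable (r_e : ℝ)

theorem continuousOn_forchheimer_integrand (α β A : ℝ) :
    ContinuousOn (fun r ↦ (α + β * A * (r_e ^ 2 - r ^ 2) * r⁻¹) * (r_e ^ 2 - r ^ 2) ^ 2 * r⁻¹)
      (Ioi 0) := by
  intro x (hx : 0 < x)
  have := hx.ne'
  exact ContinuousAt.continuousWithinAt (by fun_prop (disch := assumption))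

theorem continuousOn_darcy_integrand :
    ContinuousOn (fun r ↦ (r_e ^ 2 - r ^ 2) ^ 2 * r⁻¹) (Ioi 0) := by
  intro x (hx : 0 < x)
  have := hx.ne'
  exact ContinuousAt.continuousWithinAt (by fun_prop (disch := assumption))

theorem continuousOn_preDarcy_integrand {s : ℝ} (hs : s ≤ 2) :
    ContinuousOn (fun r ↦ (r_e ^ 2 - r ^ 2) ^ (2 - s) * r ^ (s - 1)) (Ioi 0) := by
  intro x (hx : 0 < x)
  have := hx.ne'
  refine ContinuousAt.continuousWithinAt (ContinuousAt.mul ?_ ?_)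
  · exact (Real.continuous_rpow_const (by linarith)).continuousAt.comp (by fun_prop)
  · exact Real.continuousAt_rpow_const _ _ (Or.inl hx.ne')

theorem intervalIntegral_darcy_integrand_pos {a b : ℝ} (ha : 0 < a) (hab : a < b)
    (hb : b ≤ r_e) :
    0 < ∫ r in a..b, (r_e ^ 2 - r ^ 2) ^ 2 * r⁻¹ := by
  refine intervalIntegral.intervalIntegral_pos_of_pos_on ?_ (fun x hx ↦ ?_) hab
  · exact (continuousOn_darcy_integrand r_e).intervalIntegrable_of_Ioi ha (ha.trans hab)
  · have hx0 : 0 < x := ha.trans hx.1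
    have : 0 < r_e ^ 2 - x ^ 2 := by nlinarith [hx.2]
    positivity

end Integrands

theorem integral_mul_mul_radialVelocity_sq_eq {r_w r_F r_D r_e α β lam s A : ℝ} {g : ℝ → ℝ}
    (hrw : 0 < r_w) (hA : 0 < A) (hs : s ≤ 2)
    (hwF : r_w ≤ r_F) (hFD : r_F ≤ r_D) (hDe : r_D ≤ r_e)
    (hgF : ∀ ξ, radialVelocity A r_e r_F ≤ ξ → g ξ = α + β * ξ)
    (hgD : ∀ ξ, radialVelocity A r_e r_D ≤ ξ → ξ < radialVelocity A r_e r_F → g ξ = α)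
    (hgpD : ∀ ξ, ξ < radialVelocity A r_e r_D → g ξ = lam * ξ ^ (-s)) :
    ∫ r in r_w..r_e, r * g (radialVelocity A r_e r) * radialVelocity A r_e r ^ 2 =
      A ^ 2 * ((∫ r in r_w..r_F,
          (α + β * A * (r_e ^ 2 - r ^ 2) * r⁻¹) * (r_e ^ 2 - r ^ 2) ^ 2 * r⁻¹) +
        α * (∫ r in r_F..r_D, (r_e ^ 2 - r ^ 2) ^ 2 * r⁻¹) +
        lam * A ^ (-s) * ∫ r in r_D..r_e, (r_e ^ 2 - r ^ 2) ^ (2 - s) * r ^ (s - 1)) := by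
  have hv := radialVelocity_strictAntiOn (r_e := r_e) hA
  have hF : 0 < r_F := hrw.trans_le hwF
  have hD : 0 < r_D := hF.trans_le hFD
  have he : 0 < r_e := hD.trans_le hDe
  rw [intervalIntegral_eq_add_add_of_eqOn_Ioo hwF hFD hDe (f₁ := fun r ↦ A ^ 2 * _)
    (f₂ := fun r ↦ A ^ 2 * α * _) (f₃ := fun r ↦ A ^ 2 * (lam * A ^ (-s)) * _) ?_ ?_ ?_
    ((continuousOn_forchheimer_integrand r_e α β A).intervalIntegrable_of_Ioi hrw hF
      |>.const_mul _)
    ((continuousOn_darcy_integrand r_e).intervalIntegrable_of_Ioi hF hD |>.const_mul _)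
    ((continuousOn_preDarcy_integrand r_e hs).intervalIntegrable_of_Ioi hD he |>.const_mul _)]
  · simp only [intervalIntegral.integral_const_mul]
    ring
  · rintro r ⟨hwr, hrF⟩
    have hr : 0 < r := hrw.trans hwr
    dsimp only
    rw [hgF _ (hv hr hF hrF).le, mul_forchheimer_mul_radialVelocity_sq α β hr.ne']
  · rintro r ⟨hFr, hrD⟩
    have hr : 0 < r := hF.trans hFr
    dsimp only
    rw [hgD _ (hv hr hD hrD).le (hv hF hr hFr), mul_darcy_mul_radialVelocity_sq α hr.ne']
  · rintro r ⟨hDr, hre⟩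
    have hr : 0 < r := hD.trans hDr
    dsimp only
    rw [hgpD _ (hv hD hr hDr), mul_preDarcy_mul_radialVelocity_sq lam s hA hr hre]

theorem pi_FDpD_through_darcy_general
    (r_w r_e h Q α β lam s A : ℝ)
    (hrw : 0 < r_w) (hre : r_w < r_e)
    (hα : 0 < α) (hs1 : s < 1)
    (v : ℝ → ℝ) (hv : ∀ r, v r = A * (r_e ^ 2 - r ^ 2) / r)
    (v_D v_F : ℝ) (hvD0 : 0 < v_D) (hvDF : v_D ≤ v_F)
    (r_F r_D : ℝ)
    (hrF : r_F ∈ Set.Icc r_w r_e) (hrD : r_D ∈ Set.Icc r_w r_e)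
    (hvrF : v r_F = v_F) (hvrD : v r_D = v_D)
    (g : ℝ → ℝ)
    (hg : ∀ ξ : ℝ, g ξ =
      if v_F ≤ ξ then α + β * ξ else if v_D ≤ ξ then α else lam * ξ ^ (-s)) :
    Q ^ 2 / (2 * Real.pi * h * ∫ r in r_w..r_e, r * g (v r) * v r ^ 2)
      = (Q ^ 2 / (2 * Real.pi * h * ∫ r in r_w..r_e, r * α * v r ^ 2)) *
          (α * ∫ r in r_w..r_e, (r_e ^ 2 - r ^ 2) ^ 2 * r⁻¹) /
          ((∫ r in r_w..r_F,
              (α + β * A * (r_e ^ 2 - r ^ 2) * r⁻¹) * (r_e ^ 2 - r ^ 2) ^ 2 * r⁻¹) +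
            α * (∫ r in r_F..r_D, (r_e ^ 2 - r ^ 2) ^ 2 * r⁻¹) +
            lam * A ^ (-s) *
              ∫ r in r_D..r_e, (r_e ^ 2 - r ^ 2) ^ (2 - s) * r ^ (s - 1)) := by
  obtain rfl : v = radialVelocity A r_e := funext hv
  subst hvrF hvrD
  have hF : 0 < r_F := hrw.trans_le hrF.1
  have hD : 0 < r_D := hrw.trans_le hrD.1
  have hA : 0 < A := pos_of_radialVelocity_pos hD hrD.2 hvD0
  have hFD : r_F ≤ r_D := ((radialVelocity_strictAntiOn hA).le_iff_ge hD hF).mp hvDF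
  have hsplit := integral_mul_mul_radialVelocity_sq_eq (g := g) hrw hA (by linarith : s ≤ 2)
    hrF.1 hFD hrD.2 (fun ξ hξ ↦ by rw [hg, if_pos hξ])
    (fun ξ hξD hξF ↦ by rw [hg, if_neg hξF.not_ge, if_pos hξD])
    (fun ξ hξ ↦ by rw [hg, if_neg (hξ.trans_le hvDF).not_ge, if_neg hξ.not_ge])
  have hdarcy : ∫ r in r_w..r_e, r * α * radialVelocity A r_e r ^ 2 =
      A ^ 2 * (α * ∫ r in r_w..r_e, (r_e ^ 2 - r ^ 2) ^ 2 * r⁻¹) := by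
    rw [intervalIntegral_congr_Ioo hre.le (g := fun r ↦ A ^ 2 * α * _)
      fun r hr ↦ mul_darcy_mul_radialVelocity_sq α (hrw.trans hr.1).ne',
      intervalIntegral.integral_const_mul, mul_assoc]
  rw [hsplit, hdarcy]
  exact (div_mul_div_eq_div_of_ne_zero _ _ _ _ _
    (mul_pos hα (intervalIntegral_darcy_integrand_pos r_e hrw hre le_rfl)).ne').symm

/-- Proposition 3.3, Forchheimer–Darcy–pre-Darcy (FDpD) case:
`J_FDpD = J_D · S_D[r_w, r_e] / (S_F[r_w, r_F] + S_D[r_F, r_D] + S_pD[r_D, r_e])`. -/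
theorem pi_FDpD_through_darcy
    (r_w r_e h Q α β lam s A : ℝ)
    (hrw : 0 < r_w) (hre : r_w < r_e) (hh : 0 < h) (hQ : 0 < Q)
    (hα : 0 < α) (hβ : 0 < β) (hlam : 0 < lam) (hs0 : 0 ≤ s) (hs1 : s < 1)
    (hA : A = Q / (2 * Real.pi * h * (r_e ^ 2 - r_w ^ 2)))
    (v : ℝ → ℝ) (hv : ∀ r, v r = A * (r_e ^ 2 - r ^ 2) / r)
    (v_D v_F : ℝ) (hvD0 : 0 < v_D) (hvDF : v_D ≤ v_F) (hvFw : v_F ≤ v r_w)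
    (r_F r_D : ℝ)
    (hrF : r_F ∈ Set.Icc r_w r_e) (hrD : r_D ∈ Set.Icc r_w r_e)
    (hvrF : v r_F = v_F) (hvrD : v r_D = v_D)
    (g : ℝ → ℝ)
    (hg : ∀ ξ : ℝ, g ξ =
      if v_F ≤ ξ then α + β * ξ else if v_D ≤ ξ then α else lam * ξ ^ (-s)) :
    Q ^ 2 / (2 * Real.pi * h * ∫ r in r_w..r_e, r * g (v r) * v r ^ 2)
      = (Q ^ 2 / (2 * Real.pi * h * ∫ r in r_w..r_e, r * α * v r ^ 2)) *
          (α * ∫ r in r_w..r_e, (r_e ^ 2 - r ^ 2) ^ 2 * r⁻¹) /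
          ((∫ r in r_w..r_F,
              (α + β * A * (r_e ^ 2 - r ^ 2) * r⁻¹) * (r_e ^ 2 - r ^ 2) ^ 2 * r⁻¹) +
            α * (∫ r in r_F..r_D, (r_e ^ 2 - r ^ 2) ^ 2 * r⁻¹) +
            lam * A ^ (-s) *
              ∫ r in r_D..r_e, (r_e ^ 2 - r ^ 2) ^ (2 - s) * r ^ (s - 1)) :=
  pi_FDpD_through_darcy_general r_w r_e h Q α β lam s A hrw hre hα hs1 v hv v_D v_F hvD0 hvDF r_F
    r_D hrF hrD hvrF hvrD g hg
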